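/- The contraction of Laufer's first example surjects onto X: for every integer k ≥ 1 and every (v₁,v₂,v₃,v₄) ∈ ℂ⁴ with v₂v₄ − v₃² + v₃v₁ᵏ = 0, either there exist x, y₁, y₂ ∈ ℂ with v₁ = y₂, v₂ = x²y₁ + xy₂ᵏ, v₃ = xy₁ + y₂ᵏ, v₄ = y₁, or there exist w, z₁, z₂ ∈ ℂ with v₁ = z₂, v₂ = z₁, v₃ = wz₁, v₄ = w²z₁ − wz₂ᵏ. -/

import Mathlib

/-!
Every point of `X` with `v₄ ≠ 0` lies in the image of the first chart (solve `v₃ = x v₄ + v₁ᵏ`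
for `x`), and every point with `v₂ ≠ 0` in the image of the second (solve `v₃ = w v₂` for `w`);
in both cases the equation of `X` is exactly the remaining coordinate identity. When
`v₂ = v₄ = 0` the equation reads `v₃ (v₃ - v₁ᵏ) = 0`: the point is `(x, y₁) = (0, 0)` of the
first chart if `v₃ = v₁ᵏ`, and `(w, z₁) = (0, 0)` of the second if `v₃ = 0`.
-/

namespace LauferFirstExample

variable {F : Type*} [Field F] {a v₂ v₃ v₄ : F}

theorem exists_first_chart_coord (h : v₂ * v₄ - v₃ ^ 2 + v₃ * a = 0) (h₄ : v₄ ≠ 0) :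
    ∃ x : F, v₂ = x ^ 2 * v₄ + x * a ∧ v₃ = x * v₄ + a := by
  obtain ⟨x, hx⟩ : ∃ x, x * v₄ = v₃ - a := ⟨(v₃ - a) / v₄, div_mul_cancel₀ _ h₄⟩
  refine ⟨x, mul_right_cancel₀ h₄ ?_, by linear_combination -hx⟩
  linear_combination h - (x * v₄ + v₃) * hx

theorem exists_second_chart_coord (h : v₂ * v₄ - v₃ ^ 2 + v₃ * a = 0) (h₂ : v₂ ≠ 0) :
    ∃ w : F, v₃ = w * v₂ ∧ v₄ = w ^ 2 * v₂ - w * a := by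
  obtain ⟨w, hw⟩ : ∃ w, w * v₂ = v₃ := ⟨v₃ / v₂, div_mul_cancel₀ _ h₂⟩
  refine ⟨w, hw.symm, mul_left_cancel₀ h₂ ?_⟩
  linear_combination h - (w * v₂ + v₃ - a) * hw

end LauferFirstExample

open LauferFirstExample in
theorem laufer_first_example_contraction_surjective_general (k : ℕ)
    (v₁ v₂ v₃ v₄ : ℂ) (h : v₂ * v₄ - v₃ ^ 2 + v₃ * v₁ ^ k = 0) :
    (∃ x y₁ y₂ : ℂ, v₁ = y₂ ∧ v₂ = x ^ 2 * y₁ + x * y₂ ^ k ∧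
      v₃ = x * y₁ + y₂ ^ k ∧ v₄ = y₁) ∨
    (∃ w z₁ z₂ : ℂ, v₁ = z₂ ∧ v₂ = z₁ ∧ v₃ = w * z₁ ∧
      v₄ = w ^ 2 * z₁ - w * z₂ ^ k) := by
  by_cases h₄ : v₄ = 0
  · by_cases h₂ : v₂ = 0
    · subst h₂ h₄
      have : v₃ * (v₃ - v₁ ^ k) = 0 := by linear_combination -h
      rcases mul_eq_zero.1 this with h₃ | h₃
      · exact .inr ⟨0, 0, v₁, rfl, rfl, by simp [h₃], by ring⟩
      · exact .inl ⟨0, 0, v₁, rfl, by ring, by linear_combination h₃, rfl⟩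
    · obtain ⟨w, hw₃, hw₄⟩ := exists_second_chart_coord h h₂
      exact .inr ⟨w, v₂, v₁, rfl, rfl, hw₃, hw₄⟩
  · obtain ⟨x, hx₂, hx₃⟩ := exists_first_chart_coord h h₄
    exact .inl ⟨x, v₄, v₁, rfl, hx₂, hx₃, rfl⟩

/-- The contraction of Laufer's first example surjects onto
    `X = {v ∈ ℂ⁴ : v₂v₄ - v₃² + v₃v₁ᵏ = 0}`. -/
theorem laufer_first_example_contraction_surjective (k : ℕ) (hk : 1 ≤ k)
    (v₁ v₂ v₃ v₄ : ℂ) (h : v₂ * v₄ - v₃ ^ 2 + v₃ * v₁ ^ k = 0) :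
    (∃ x y₁ y₂ : ℂ, v₁ = y₂ ∧ v₂ = x ^ 2 * y₁ + x * y₂ ^ k ∧
      v₃ = x * y₁ + y₂ ^ k ∧ v₄ = y₁) ∨
    (∃ w z₁ z₂ : ℂ, v₁ = z₂ ∧ v₂ = z₁ ∧ v₃ = w * z₁ ∧
      v₄ = w ^ 2 * z₁ - w * z₂ ^ k) :=
  laufer_first_example_contraction_surjective_general k v₁ v₂ v₃ v₄ h
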